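/- Let f(x) = x/(e^x - 1) + x/2 ∈ ℚ[[x]] and, for variables s, t, let A(s,t,x) = (f(x)-f(sx))f(tx)/t. Then for all n ≥ 3 the coefficient of x^n in A(s,t,x)+A(t,s,x) lies in the ideal (s+t-1) of ℚ[s,t,s^{-1},t^{-1}]. -/

import Mathlib

open PowerSeries

noncomputable section

/-- The field `ℚ(s,t)` of rational functions in two variables `s = X 0`, `t = X 1`. -/
abbrev Frac2 : Type := FractionRing (MvPolynomial (Fin 2) ℚ)

/-- The image of `s` in `ℚ(s,t)`. -/
def sF : Frac2 := algebraMap (MvPolynomial (Fin 2) ℚ) Frac2 (MvPolynomial.X 0)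

/-- The image of `t` in `ℚ(s,t)`. -/
def tF : Frac2 := algebraMap (MvPolynomial (Fin 2) ℚ) Frac2 (MvPolynomial.X 1)

/-- Getzler's `A(s,t,x) = (f(x) - f(sx))·f(tx)/t`, as a power series in `x`
with coefficients in `ℚ(s,t)`. -/
def Aser (f : PowerSeries ℚ) : PowerSeries Frac2 :=
  (PowerSeries.map (algebraMap ℚ Frac2) f
      - PowerSeries.rescale sF (PowerSeries.map (algebraMap ℚ Frac2) f))
    * PowerSeries.rescale tF (PowerSeries.map (algebraMap ℚ Frac2) f)
    * PowerSeries.C tF⁻¹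

/-- Getzler's `A(t,s,x) = (f(x) - f(tx))·f(sx)/s`. -/
def Aser' (f : PowerSeries ℚ) : PowerSeries Frac2 :=
  (PowerSeries.map (algebraMap ℚ Frac2) f
      - PowerSeries.rescale tF (PowerSeries.map (algebraMap ℚ Frac2) f))
    * PowerSeries.rescale sF (PowerSeries.map (algebraMap ℚ Frac2) f)
    * PowerSeries.C sF⁻¹

/-! ### Auxiliary material -/

lemma myRescaleMap {R S : Type*} [CommSemiring R] [CommSemiring S] (g : R →+* S) (a : R)
    (φ : PowerSeries R) :
    PowerSeries.map g (rescale a φ) = rescale (g a) (PowerSeries.map g φ) := by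
  ext n
  simp [coeff_rescale, coeff_map, map_mul, map_pow]

lemma myMapMap {R S T : Type*} [CommSemiring R] [CommSemiring S] [CommSemiring T]
    (g : S →+* T) (h : R →+* S) (φ : PowerSeries R) :
    PowerSeries.map g (PowerSeries.map h φ) = PowerSeries.map (g.comp h) φ := by
  ext n; simp [coeff_map]

lemma myKey {A : Type*} [CommRing A] [IsDomain A] [Algebra ℚ A]
    (a : A) (ha : a ≠ 0) (hb : (1 : A) - a ≠ 0)
    (f : PowerSeries ℚ)
    (hf : f * (2 * (PowerSeries.exp ℚ - 1)) = PowerSeries.X * (PowerSeries.exp ℚ + 1)) :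
    4 * ((PowerSeries.map (algebraMap ℚ A) f) *
        (C a * rescale (1 - a) (PowerSeries.map (algebraMap ℚ A) f)
          + C (1 - a) * rescale a (PowerSeries.map (algebraMap ℚ A) f))
      - rescale a (PowerSeries.map (algebraMap ℚ A) f)
          * rescale (1 - a) (PowerSeries.map (algebraMap ℚ A) f))
    = C a * C (1 - a) * X ^ 2 := by
  set F : PowerSeries A := PowerSeries.map (algebraMap ℚ A) f with hF
  have h1 : F * (2 * (exp A - 1)) = X * (exp A + 1) := by
    have := congrArg (PowerSeries.map (algebraMap ℚ A)) hf
    simpa [map_mul, map_sub, map_add, map_one, map_ofNat, PowerSeries.map_X,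
      PowerSeries.map_exp] using this
  have h2 : rescale a F * (2 * (rescale a (exp A) - 1))
      = C a * X * (rescale a (exp A) + 1) := by
    have := congrArg (rescale a) h1
    simpa [map_mul, map_sub, map_add, map_one, map_ofNat, rescale_X, mul_assoc] using this
  have h3 : rescale (1 - a) F * (2 * (rescale (1 - a) (exp A) - 1))
      = C (1 - a) * X * (rescale (1 - a) (exp A) + 1) := by
    have := congrArg (rescale (1 - a)) h1
    simpa [map_mul, map_sub, map_add, map_one, map_ofNat, rescale_X, mul_assoc] using this
  have h4 : rescale a (exp A) * rescale (1 - a) (exp A) = exp A := by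
    rw [exp_mul_exp_eq_exp_add]
    simp [rescale_one]
  set E : PowerSeries A := exp A with hE
  set Ea : PowerSeries A := rescale a (exp A) with hEa
  set Eb : PowerSeries A := rescale (1 - a) (exp A) with hEb
  set S : PowerSeries A := rescale a F with hS
  set T : PowerSeries A := rescale (1 - a) F with hT
  have hne1 : E - 1 ≠ 0 := by
    intro h
    have := congrArg (coeff 1) h
    simp [hE] at this
  have hne2 : Ea - 1 ≠ 0 := by
    intro h
    have := congrArg (coeff 1) h
    simp [hEa, coeff_rescale] at this
    exact ha this
  have hne3 : Eb - 1 ≠ 0 := by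
    intro h
    have := congrArg (coeff 1) h
    simp [hEb, coeff_rescale] at this
    exact hb this
  have h13 : (F * (2 * (E - 1)) - X * (E + 1))
      * (T * (2 * (Eb - 1)) - C (1 - a) * X * (Eb + 1)) = 0 := by
    rw [sub_eq_zero.mpr h1, zero_mul]
  have h12 : (F * (2 * (E - 1)) - X * (E + 1))
      * (S * (2 * (Ea - 1)) - C a * X * (Ea + 1)) = 0 := by
    rw [sub_eq_zero.mpr h1, zero_mul]
  have h23 : (S * (2 * (Ea - 1)) - C a * X * (Ea + 1))
      * (T * (2 * (Eb - 1)) - C (1 - a) * X * (Eb + 1)) = 0 := by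
    rw [sub_eq_zero.mpr h2, zero_mul]
  have hkey : (4 * (F * (C a * T + C (1 - a) * S) - S * T)
      - C a * C (1 - a) * X ^ 2) * ((E - 1) * ((Ea - 1) * (Eb - 1))) = 0 := by
    linear_combination (C a * (Ea - 1)) * h13
      + (C a * (Ea - 1) * (C (1 - a)) * X * (Eb + 1)) * h1
      + (C a * (Ea - 1) * X * (E + 1)) * h3
      + (C (1 - a) * (Eb - 1)) * h12
      + (C (1 - a) * (Eb - 1) * (C a) * X * (Ea + 1)) * h1
      + (C (1 - a) * (Eb - 1) * X * (E + 1)) * h2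
      - (E - 1) * h23
      - ((E - 1) * (C (1 - a)) * X * (Eb + 1)) * h2
      - ((E - 1) * (C a) * X * (Ea + 1)) * h3
      + (4 * (C a) * (C (1 - a)) * X ^ 2) * h4
  rcases mul_eq_zero.mp hkey with h | h
  · linear_combination h
  · exact ((mul_ne_zero hne1 (mul_ne_zero hne2 hne3)) h).elim

/-- `F(x) = f(x)` with coefficients pushed into `ℚ[s,t]`. -/
def Fser (f : PowerSeries ℚ) : PowerSeries (MvPolynomial (Fin 2) ℚ) :=
  PowerSeries.map (algebraMap ℚ (MvPolynomial (Fin 2) ℚ)) f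

/-- `st·(A(s,t,x)+A(t,s,x))`, which has coefficients in `ℚ[s,t]`. -/
def Gser (f : PowerSeries ℚ) : PowerSeries (MvPolynomial (Fin 2) ℚ) :=
  Fser f * (PowerSeries.C (MvPolynomial.X 0) * rescale (MvPolynomial.X 1) (Fser f)
      + PowerSeries.C (MvPolynomial.X 1) * rescale (MvPolynomial.X 0) (Fser f))
    - PowerSeries.C (MvPolynomial.X 0 + MvPolynomial.X 1)
        * (rescale (MvPolynomial.X 0) (Fser f) * rescale (MvPolynomial.X 1) (Fser f))

lemma sF_ne : sF ≠ 0 := by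
  rw [sF, ← map_zero (algebraMap (MvPolynomial (Fin 2) ℚ) Frac2)]
  intro h
  exact MvPolynomial.X_ne_zero 0 (IsFractionRing.injective (MvPolynomial (Fin 2) ℚ) Frac2 h)

lemma tF_ne : tF ≠ 0 := by
  rw [tF, ← map_zero (algebraMap (MvPolynomial (Fin 2) ℚ) Frac2)]
  intro h
  exact MvPolynomial.X_ne_zero 1 (IsFractionRing.injective (MvPolynomial (Fin 2) ℚ) Frac2 h)

lemma map_Gser (f : PowerSeries ℚ) :
    (Aser f + Aser' f) * PowerSeries.C (sF * tF)
      = PowerSeries.map (algebraMap (MvPolynomial (Fin 2) ℚ) Frac2) (Gser f) := by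
  have hcs : PowerSeries.C sF⁻¹ * PowerSeries.C sF = 1 := by
    rw [← map_mul, inv_mul_cancel₀ sF_ne, map_one]
  have hct : PowerSeries.C tF⁻¹ * PowerSeries.C tF = 1 := by
    rw [← map_mul, inv_mul_cancel₀ tF_ne, map_one]
  have hcomp : (algebraMap (MvPolynomial (Fin 2) ℚ) Frac2).comp (algebraMap ℚ (MvPolynomial (Fin 2) ℚ))
      = algebraMap ℚ Frac2 := (IsScalarTower.algebraMap_eq ℚ _ Frac2).symm
  rw [Aser, Aser', Gser, Fser]
  simp only [map_sub, map_mul, map_add, PowerSeries.map_C, myRescaleMap, myMapMap, hcomp]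
  rw [show (algebraMap (MvPolynomial (Fin 2) ℚ) Frac2) (MvPolynomial.X 0) = sF from rfl,
    show (algebraMap (MvPolynomial (Fin 2) ℚ) Frac2) (MvPolynomial.X 1) = tF from rfl]
  set Fb := PowerSeries.map (algebraMap ℚ Frac2) f
  linear_combination (PowerSeries.C sF * rescale tF Fb * (Fb - rescale sF Fb)) * hct
    + (PowerSeries.C tF * rescale sF Fb * (Fb - rescale tF Fb)) * hcs

/-- Substitution `s ↦ s`, `t ↦ 1 - s`. -/
def σsub : MvPolynomial (Fin 2) ℚ →ₐ[ℚ] MvPolynomial (Fin 2) ℚ :=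
  MvPolynomial.aeval ![MvPolynomial.X 0, 1 - MvPolynomial.X 0]

lemma σsub_X0 : σsub (MvPolynomial.X 0) = MvPolynomial.X 0 := by
  simp [σsub, MvPolynomial.aeval_X]

lemma σsub_X1 : σsub (MvPolynomial.X 1) = 1 - MvPolynomial.X 0 := by
  simp [σsub, MvPolynomial.aeval_X]

lemma σsub_Fser (f : PowerSeries ℚ) :
    PowerSeries.map (σsub : MvPolynomial (Fin 2) ℚ →+* MvPolynomial (Fin 2) ℚ) (Fser f)
      = Fser f := by
  refine PowerSeries.ext fun m => ?_
  simp only [Fser, PowerSeries.coeff_map, RingHom.coe_coe]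
  exact σsub.commutes _

lemma σsub_Gser (f : PowerSeries ℚ)
    (hf : f * (2 * (PowerSeries.exp ℚ - 1)) = PowerSeries.X * (PowerSeries.exp ℚ + 1)) :
    4 * PowerSeries.map
        (σsub : MvPolynomial (Fin 2) ℚ →+* MvPolynomial (Fin 2) ℚ) (Gser f)
      = PowerSeries.C (MvPolynomial.X 0) * PowerSeries.C (1 - MvPolynomial.X 0) * X ^ 2 := by
  have hbne : (1 : MvPolynomial (Fin 2) ℚ) - MvPolynomial.X 0 ≠ 0 := by
    intro h
    have := congrArg MvPolynomial.constantCoeff h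
    simp at this
  have hG : PowerSeries.map
      (σsub : MvPolynomial (Fin 2) ℚ →+* MvPolynomial (Fin 2) ℚ) (Gser f)
      = Fser f * (PowerSeries.C (MvPolynomial.X 0)
            * rescale (1 - MvPolynomial.X 0) (Fser f)
          + PowerSeries.C (1 - MvPolynomial.X 0) * rescale (MvPolynomial.X 0) (Fser f))
        - rescale (MvPolynomial.X 0) (Fser f) * rescale (1 - MvPolynomial.X 0) (Fser f) := by
    rw [Gser]
    simp only [map_sub, map_mul, map_add, PowerSeries.map_C, myRescaleMap, σsub_Fser,
      RingHom.coe_coe, σsub_X0, σsub_X1, map_one]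
    ring
  rw [hG]
  unfold Fser
  exact myKey (MvPolynomial.X 0) (MvPolynomial.X_ne_zero 0) hbne f hf

lemma σsub_coeff_Gser (f : PowerSeries ℚ)
    (hf : f * (2 * (PowerSeries.exp ℚ - 1)) = PowerSeries.X * (PowerSeries.exp ℚ + 1))
    (n : ℕ) (hn : 3 ≤ n) :
    σsub (PowerSeries.coeff n (Gser f)) = 0 := by
  have hx := congrArg (PowerSeries.coeff n) (σsub_Gser f hf)
  rw [show (4 : PowerSeries (MvPolynomial (Fin 2) ℚ))
      = PowerSeries.C 4 from (map_ofNat _ 4).symm,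
    PowerSeries.coeff_C_mul, PowerSeries.coeff_map] at hx
  rw [← map_mul, PowerSeries.coeff_C_mul, PowerSeries.coeff_X_pow, if_neg (by omega),
    mul_zero] at hx
  have h4 : (4 : MvPolynomial (Fin 2) ℚ) ≠ 0 := by norm_num
  exact (mul_eq_zero.mp hx).resolve_left h4

lemma mem_span_coeff_Gser (f : PowerSeries ℚ)
    (hf : f * (2 * (PowerSeries.exp ℚ - 1)) = PowerSeries.X * (PowerSeries.exp ℚ + 1))
    (n : ℕ) (hn : 3 ≤ n) :
    PowerSeries.coeff n (Gser f)
      ∈ Ideal.span {(MvPolynomial.X 0 + MvPolynomial.X 1 - 1 : MvPolynomial (Fin 2) ℚ)} := by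
  set I : Ideal (MvPolynomial (Fin 2) ℚ) :=
    Ideal.span {MvPolynomial.X 0 + MvPolynomial.X 1 - 1} with hI
  have hqs : (Ideal.Quotient.mk I).comp
      (σsub : MvPolynomial (Fin 2) ℚ →+* MvPolynomial (Fin 2) ℚ) = Ideal.Quotient.mk I := by
    apply MvPolynomial.ringHom_ext
    · intro r
      simp only [RingHom.coe_comp, Function.comp_apply, RingHom.coe_coe]
      rw [show σsub (MvPolynomial.C r) = MvPolynomial.C r from by
        rw [show (MvPolynomial.C r : MvPolynomial (Fin 2) ℚ) = algebraMap ℚ _ r from rfl]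
        exact σsub.commutes r]
    · intro i
      simp only [RingHom.coe_comp, Function.comp_apply, RingHom.coe_coe]
      fin_cases i
      · show Ideal.Quotient.mk I (σsub (MvPolynomial.X 0))
            = Ideal.Quotient.mk I (MvPolynomial.X 0)
        rw [σsub_X0]
      · show Ideal.Quotient.mk I (σsub (MvPolynomial.X 1))
            = Ideal.Quotient.mk I (MvPolynomial.X 1)
        rw [σsub_X1, Ideal.Quotient.eq]
        exact Ideal.mem_span_singleton.mpr ⟨-1, by ring⟩
  have h := RingHom.congr_fun hqs (PowerSeries.coeff n (Gser f))
  simp only [RingHom.coe_comp, Function.comp_apply, RingHom.coe_coe] at h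
  rw [σsub_coeff_Gser f hf n hn, map_zero] at h
  exact Ideal.Quotient.eq_zero_iff_mem.mp h.symm

/-- With `f(x) = x/(e^x-1) + x/2` (characterized by `f·2(e^x-1) = x(e^x+1)`),
for every `n ≥ 3` the coefficient of `xⁿ` in `A(s,t,x) + A(t,s,x)` lies in the
ideal generated by `s + t - 1` in the Laurent polynomial ring `ℚ[s,t,s⁻¹,t⁻¹]`:
i.e., after clearing a power of `st` it is the image of an element of the
ideal `(s + t - 1)` of `ℚ[s,t]`. -/
theorem stmt_19 (f : PowerSeries ℚ)
    (hf : f * (2 * (PowerSeries.exp ℚ - 1)) = PowerSeries.X * (PowerSeries.exp ℚ + 1))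
    (n : ℕ) (hn : 3 ≤ n) :
    ∃ (N : ℕ) (p : MvPolynomial (Fin 2) ℚ),
      p ∈ Ideal.span {(MvPolynomial.X 0 + MvPolynomial.X 1 - 1 : MvPolynomial (Fin 2) ℚ)} ∧
      (PowerSeries.coeff (R := Frac2) n) (Aser f + Aser' f)
          * (algebraMap (MvPolynomial (Fin 2) ℚ) Frac2 (MvPolynomial.X 0 * MvPolynomial.X 1)) ^ N
        = algebraMap (MvPolynomial (Fin 2) ℚ) Frac2 p := by
  refine ⟨1, PowerSeries.coeff n (Gser f), mem_span_coeff_Gser f hf n hn, ?_⟩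
  rw [pow_one, map_mul,
    show algebraMap (MvPolynomial (Fin 2) ℚ) Frac2 (MvPolynomial.X 0) = sF from rfl,
    show algebraMap (MvPolynomial (Fin 2) ℚ) Frac2 (MvPolynomial.X 1) = tF from rfl,
    ← PowerSeries.coeff_mul_C, map_Gser, PowerSeries.coeff_map]
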